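/- Let (α, T, N, B, κ, τ) be a spacelike Frenet curve (with spacelike principal normal) in E₁³ with κ and τ twice differentiable, and define the Darboux curve W(s) = τ(s)·T(s) − κ(s)·B(s). If there is a function μ : ℝ → ℝ with W''(s) = μ(s)·N(s) for all s, then κ'' ≡ 0 and τ'' ≡ 0, so there exist constants a, b, c, d ∈ ℝ with κ(s) = a·s + b and τ(s) = c·s + d for all s; that is, α is an Euler spiral in E₁³. -/

import Mathlib

/-!
Differentiating `W = τ T − κ B` with `T' = κ N`, `B' = τ N` gives `W' = τ' T − κ' B`, the
`N`-components `τ κ` and `κ τ` cancelling. Differentiating once more,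
`W'' = τ'' T + (τ' κ − κ' τ) N − κ'' B`. Since `W''` is a multiple of `N`, pairing with `T` and
with `B` (Minkowski-orthogonal to `N`, of squares `1` and `−1`) kills `τ''` and `κ''`, and a
function with vanishing second derivative on `ℝ` is affine.
-/

/-- The Minkowski bilinear form on ℝ³: `⟨x,y⟩ = −x₀y₀ + x₁y₁ + x₂y₂`. -/
def mink (x y : Fin 3 → ℝ) : ℝ := -(x 0 * y 0) + x 1 * y 1 + x 2 * y 2

lemma mink_comm (x y : Fin 3 → ℝ) : mink x y = mink y x := by
  simp only [mink]; ring

lemma mink_add_left (x y z : Fin 3 → ℝ) : mink (x + y) z = mink x z + mink y z := by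
  simp only [mink, Pi.add_apply]; ring

lemma mink_sub_left (x y z : Fin 3 → ℝ) : mink (x - y) z = mink x z - mink y z := by
  simp only [mink, Pi.sub_apply]; ring

lemma mink_smul_left (a : ℝ) (x y : Fin 3 → ℝ) : mink (a • x) y = a * mink x y := by
  simp only [mink, Pi.smul_apply, smul_eq_mul]; ring

lemma frame_coeffs_eq_zero_of_eq_smul_normal {t n b : Fin 3 → ℝ} {x y z m : ℝ}
    (htt : mink t t = 1) (hbb : mink b b = -1) (htn : mink t n = 0) (htb : mink t b = 0)
    (hnb : mink n b = 0) (h : x • t + y • n - z • b = m • n) : x = 0 ∧ z = 0 := by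
  have hT := congrArg (mink · t) h
  have hB := congrArg (mink · b) h
  simp only [mink_add_left, mink_sub_left, mink_smul_left, mink_comm n t, mink_comm b t]
    at hT hB
  rw [htt, htn, htb] at hT
  rw [htb, hnb, hbb] at hB
  constructor <;> linarith

lemma eq_mul_add_of_hasDerivAt_const {f : ℝ → ℝ} {c : ℝ} (hf : ∀ s, HasDerivAt f c s) (s : ℝ) :
    f s = c * s + f 0 := by
  have hg : ∀ x, HasDerivAt (fun x => f x - c * x) 0 x := fun x =>
    ((hf x).sub ((hasDerivAt_id' x).const_mul c)).congr_deriv (by ring)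
  have := is_const_of_deriv_eq_zero (fun x => (hg x).differentiableAt) (fun x => (hg x).deriv) s 0
  simp only [mul_zero, sub_zero] at this
  linarith

lemma eq_mul_add_of_hasDerivAt_of_second_deriv_eq_zero {f f' f'' : ℝ → ℝ}
    (hf : ∀ s, HasDerivAt f (f' s) s) (hf' : ∀ s, HasDerivAt f' (f'' s) s)
    (h0 : ∀ s, f'' s = 0) (s : ℝ) : f s = f' 0 * s + f 0 := by
  have hconst : ∀ x, f' x = f' 0 := fun x => by
    simpa using eq_mul_add_of_hasDerivAt_const (c := 0) (fun y => h0 y ▸ hf' y) x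
  exact eq_mul_add_of_hasDerivAt_const (fun x => hconst x ▸ hf x) s

lemma HasDerivAt.smul_sub_smul_of_frenet {E : Type*} [NormedAddCommGroup E] [NormedSpace ℝ E]
    {T N B : ℝ → E} {f g : ℝ → ℝ} {f' g' κ τ s : ℝ}
    (hT : HasDerivAt T (κ • N s) s) (hB : HasDerivAt B (τ • N s) s)
    (hf : HasDerivAt f f' s) (hg : HasDerivAt g g' s) :
    HasDerivAt (fun x => f x • T x - g x • B x)
      (f' • T s + (f s * κ - g s * τ) • N s - g' • B s) s := by
  refine ((hf.smul hT).sub (hg.smul hB)).congr_deriv ?_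
  simp only [smul_smul, sub_smul]
  abel

theorem darboux_geodesic_implies_euler_spiral_spacelike_general
    (T N B : ℝ → Fin 3 → ℝ) (κ τ κ' τ' κ'' τ'' : ℝ → ℝ)
    (hT : ∀ s, HasDerivAt T (κ s • N s) s)
    (hB : ∀ s, HasDerivAt B (τ s • N s) s)
    (hTT : ∀ s, mink (T s) (T s) = 1)
    (hBB : ∀ s, mink (B s) (B s) = -1)
    (hTN : ∀ s, mink (T s) (N s) = 0)
    (hTB : ∀ s, mink (T s) (B s) = 0)
    (hNB : ∀ s, mink (N s) (B s) = 0)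
    (hκ' : ∀ s, HasDerivAt κ (κ' s) s) (hτ' : ∀ s, HasDerivAt τ (τ' s) s)
    (hκ'' : ∀ s, HasDerivAt κ' (κ'' s) s) (hτ'' : ∀ s, HasDerivAt τ' (τ'' s) s)
    (W : ℝ → Fin 3 → ℝ) (hW : ∀ s : ℝ, W s = τ s • T s - κ s • B s)
    (μ : ℝ → ℝ) (hμ : ∀ s : ℝ, deriv (deriv W) s = μ s • N s) :
    (∀ s : ℝ, κ'' s = 0) ∧ (∀ s : ℝ, τ'' s = 0) ∧
      ∃ a b c d : ℝ, ∀ s : ℝ, κ s = a * s + b ∧ τ s = c * s + d := by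
  have hW' : deriv W = fun s => τ' s • T s - κ' s • B s := funext fun s => by
    rw [funext hW, ((hT s).smul_sub_smul_of_frenet (hB s) (hτ' s) (hκ' s)).deriv, mul_comm,
      sub_self, zero_smul, add_zero]
  have hW'' s : τ'' s • T s + (τ' s * κ s - κ' s * τ s) • N s - κ'' s • B s = μ s • N s := by
    rw [← hμ s, hW', ((hT s).smul_sub_smul_of_frenet (hB s) (hτ'' s) (hκ'' s)).deriv]
  have hcoeffs s := frame_coeffs_eq_zero_of_eq_smul_normal (hTT s) (hBB s) (hTN s) (hTB s)
    (hNB s) (hW'' s)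
  have hκ0 s : κ'' s = 0 := (hcoeffs s).2
  have hτ0 s : τ'' s = 0 := (hcoeffs s).1
  exact ⟨hκ0, hτ0, κ' 0, κ 0, τ' 0, τ 0, fun s =>
    ⟨eq_mul_add_of_hasDerivAt_of_second_deriv_eq_zero hκ' hκ'' hκ0 s,
      eq_mul_add_of_hasDerivAt_of_second_deriv_eq_zero hτ' hτ'' hτ0 s⟩⟩

/-- For a spacelike Frenet curve (with spacelike principal normal)
`(α, T, N, B, κ, τ)` in `E₁³` with `κ, τ` twice differentiable, if the second
derivative of the Darboux curve `W(s) = τ(s)·T(s) − κ(s)·B(s)` is everywhere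
proportional to the normal (`W'' = μ·N`), then `κ'' ≡ 0` and `τ'' ≡ 0`, so `κ`
and `τ` are affine functions of arc length: `α` is an Euler spiral in `E₁³`. -/
theorem darboux_geodesic_implies_euler_spiral_spacelike
    (α T N B : ℝ → Fin 3 → ℝ) (κ τ κ' τ' κ'' τ'' : ℝ → ℝ)
    (hα : ∀ s, HasDerivAt α (T s) s)
    (hT : ∀ s, HasDerivAt T (κ s • N s) s)
    (hN : ∀ s, HasDerivAt N (-κ s • T s + τ s • B s) s)
    (hB : ∀ s, HasDerivAt B (τ s • N s) s)
    (hTT : ∀ s, mink (T s) (T s) = 1)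
    (hNN : ∀ s, mink (N s) (N s) = 1)
    (hBB : ∀ s, mink (B s) (B s) = -1)
    (hTN : ∀ s, mink (T s) (N s) = 0)
    (hTB : ∀ s, mink (T s) (B s) = 0)
    (hNB : ∀ s, mink (N s) (B s) = 0)
    (hκ' : ∀ s, HasDerivAt κ (κ' s) s) (hτ' : ∀ s, HasDerivAt τ (τ' s) s)
    (hκ'' : ∀ s, HasDerivAt κ' (κ'' s) s) (hτ'' : ∀ s, HasDerivAt τ' (τ'' s) s)
    (W : ℝ → Fin 3 → ℝ) (hW : ∀ s : ℝ, W s = τ s • T s - κ s • B s)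
    (μ : ℝ → ℝ) (hμ : ∀ s : ℝ, deriv (deriv W) s = μ s • N s) :
    (∀ s : ℝ, κ'' s = 0) ∧ (∀ s : ℝ, τ'' s = 0) ∧
      ∃ a b c d : ℝ, ∀ s : ℝ, κ s = a * s + b ∧ τ s = c * s + d :=
  darboux_geodesic_implies_euler_spiral_spacelike_general T N B κ τ κ' τ' κ'' τ'' hT hB hTT hBB hTN
    hTB hNB hκ' hτ' hκ'' hτ'' W hW μ hμ
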